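/- arXiv:2603.01995 — 4 statements merged into one kernel-verified Lean document; each statement's English description precedes it below -/
import Mathlib

section
/- Let n ≥ 1 and let A_1, …, A_n be symmetric real m×m matrices, with associated quadratic forms P_i(x) = ⟨x, A_i x⟩ on ℝ^m. Then the following are equivalent: (i) ⟨∇P_i(x), ∇P_j(x)⟩ = 4·δ_{ij}·⟨x, A_1² x⟩ for all x ∈ ℝ^m and all i, j ∈ {1,…,n} (i.e. the polynomial map P = (P_1,…,P_n) : ℝ^m → ℝ^n is weakly horizontally conformal); (ii) A_i A_j + A_j A_i = 2 δ_{ij} A_1² for all i, j ∈ {1,…,n}. -/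
open RealInnerProductSpace

noncomputable def quadForm {m : ℕ} (A : Matrix (Fin m) (Fin m) ℝ)
    (x : EuclideanSpace ℝ (Fin m)) : ℝ :=
  ⟪x, Matrix.toEuclideanLin A x⟫

open Matrix

/-!
For a symmetric matrix `A` the gradient of `P_A(x) = ⟨x, A x⟩` is `2 A x`, so by symmetry
`⟨∇P_A(x), ∇P_B(x)⟩ = 4 ⟨A x, B x⟩ = 2 ⟨x, (A B + B A) x⟩`. Condition (i) therefore says that
the quadratic forms of the symmetric matrices `A_i A_j + A_j A_i` and `2 δ_{ij} A_1²` agree,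
and by polarization a symmetric matrix is determined by its quadratic form.
-/

theorem LinearMap.IsSymmetric.hasGradientAt_inner_self_apply {E : Type*}
    [NormedAddCommGroup E] [InnerProductSpace ℝ E] [CompleteSpace E]
    {T : E →ₗ[ℝ] E} (hT : T.IsSymmetric) (x : E) :
    HasGradientAt (fun y => ⟪y, T y⟫) ((2 : ℝ) • T x) x := by
  rw [hasGradientAt_iff_hasFDerivAt]
  refine ((hasFDerivAt_id x).inner ℝ (⟨T, hT.continuous⟩ : E →L[ℝ] E).hasFDerivAt).congr_fderiv ?_
  ext v
  simp only [ContinuousLinearMap.comp_apply, ContinuousLinearMap.prod_apply, fderivInnerCLM_apply,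
    ContinuousLinearMap.id_apply, ContinuousLinearMap.coe_mk', id_eq,
    InnerProductSpace.toDual_apply_apply]
  rw [← hT x v, real_inner_comm (T x) v, real_inner_smul_left, two_mul]

namespace Matrix

variable {m : ℕ} {A B : Matrix (Fin m) (Fin m) ℝ}

theorem IsSymm.isSymmetric_toEuclideanLin (hA : A.IsSymm) : (toEuclideanLin A).IsSymmetric :=
  isSymmetric_toEuclideanLin_iff.mpr (isHermitian_iff_isSymm.mpr hA)

theorem IsSymm.mul_add_mul (hA : A.IsSymm) (hB : B.IsSymm) : (A * B + B * A).IsSymm := by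
  rw [IsSymm, transpose_add, transpose_mul, transpose_mul, hA.eq, hB.eq, add_comm]

end Matrix

section QuadForm

variable {m : ℕ} {A B : Matrix (Fin m) (Fin m) ℝ}

theorem quadForm_add (A B : Matrix (Fin m) (Fin m) ℝ) (x : EuclideanSpace ℝ (Fin m)) :
    quadForm (A + B) x = quadForm A x + quadForm B x := by
  simp only [quadForm, map_add, LinearMap.add_apply, inner_add_right]

theorem quadForm_smul (c : ℝ) (A : Matrix (Fin m) (Fin m) ℝ) (x : EuclideanSpace ℝ (Fin m)) :
    quadForm (c • A) x = c * quadForm A x := by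
  simp only [quadForm, map_smul, LinearMap.smul_apply, real_inner_smul_right]

theorem quadForm_mul_add_mul (hA : A.IsSymm) (hB : B.IsSymm) (x : EuclideanSpace ℝ (Fin m)) :
    quadForm (A * B + B * A) x = 2 * ⟪toEuclideanLin A x, toEuclideanLin B x⟫ := by
  have hAB : quadForm (A * B) x = ⟪toEuclideanLin A x, toEuclideanLin B x⟫ := by
    simp only [quadForm, toLpLin_mul_same, LinearMap.comp_apply]
    exact (hA.isSymmetric_toEuclideanLin x _).symm
  have hBA : quadForm (B * A) x = ⟪toEuclideanLin A x, toEuclideanLin B x⟫ := by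
    simp only [quadForm, toLpLin_mul_same, LinearMap.comp_apply]
    rw [real_inner_comm]
    exact hB.isSymmetric_toEuclideanLin _ _
  rw [quadForm_add, hAB, hBA]
  ring

theorem Matrix.IsSymm.gradient_quadForm (hA : A.IsSymm) (x : EuclideanSpace ℝ (Fin m)) :
    gradient (quadForm A) x = (2 : ℝ) • toEuclideanLin A x :=
  (hA.isSymmetric_toEuclideanLin.hasGradientAt_inner_self_apply x).gradient

theorem inner_gradient_quadForm (hA : A.IsSymm) (hB : B.IsSymm) (x : EuclideanSpace ℝ (Fin m)) :
    ⟪gradient (quadForm A) x, gradient (quadForm B) x⟫ = 2 * quadForm (A * B + B * A) x := by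
  rw [hA.gradient_quadForm, hB.gradient_quadForm, real_inner_smul_left, real_inner_smul_right,
    quadForm_mul_add_mul hA hB]

theorem Matrix.IsSymm.quadForm_inj (hA : A.IsSymm) (hB : B.IsSymm) :
    (∀ x, quadForm A x = quadForm B x) ↔ A = B := by
  have hAB : (toEuclideanLin (A - B)).IsSymmetric := (hA.sub hB).isSymmetric_toEuclideanLin
  rw [← sub_eq_zero, ← toEuclideanLin.map_eq_zero_iff, ← hAB.inner_map_self_eq_zero]
  refine forall_congr' fun x => ?_
  rw [real_inner_comm, ← quadForm, ← sub_eq_zero]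
  simp only [quadForm, map_sub, LinearMap.sub_apply, inner_sub_right]

end QuadForm

/-- For symmetric real `m × m` matrices `A_1, …, A_n` (`n ≥ 1`) with
associated quadratic forms `P_i(x) = ⟨x, A_i x⟩`, the map `P = (P_1, …, P_n) : ℝ^m → ℝ^n`
is weakly horizontally conformal, i.e.
`⟨∇P_i(x), ∇P_j(x)⟩ = 4 δ_{ij} ⟨x, A_1² x⟩` for all `x, i, j`,
if and only if `A_i A_j + A_j A_i = 2 δ_{ij} A_1²` for all `i, j`. -/
theorem whc_iff_clifford_relations {m n : ℕ} (hn : 1 ≤ n)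
    (A : Fin n → Matrix (Fin m) (Fin m) ℝ) (hsymm : ∀ i, (A i).IsSymm) :
    (∀ (x : EuclideanSpace ℝ (Fin m)) (i j : Fin n),
        ⟪gradient (quadForm (A i)) x, gradient (quadForm (A j)) x⟫
          = 4 * (if i = j then 1 else 0)
              * ⟪x, Matrix.toEuclideanLin (A ⟨0, hn⟩ * A ⟨0, hn⟩) x⟫)
      ↔ (∀ i j : Fin n,
          A i * A j + A j * A i
            = (if i = j then (2 : ℝ) else 0) • (A ⟨0, hn⟩ * A ⟨0, hn⟩)) := by
  set A₀ := A ⟨0, hn⟩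
  have hA₀ : (A₀ * A₀).IsSymm := by simpa only [sq] using (hsymm ⟨0, hn⟩).pow 2
  rw [forall_comm]
  refine forall_congr' fun i => ?_
  rw [forall_comm]
  refine forall_congr' fun j => ?_
  rw [← ((hsymm i).mul_add_mul (hsymm j)).quadForm_inj (hA₀.smul _)]
  refine forall_congr' fun x => ?_
  rw [inner_gradient_quadForm (hsymm i) (hsymm j), quadForm_smul, ← quadForm]
  split_ifs <;> constructor <;> intro h <;> linarith
end

section
/- Let n ≥ 1 and let A_1, …, A_n be symmetric real m×m matrices satisfying A_i A_j + A_j A_i = 2 δ_{ij} S for all i, j, where S = A_1². Then for every μ > 0, the eigenspace E_μ = ker(S − μ·Id) is invariant under each A_i (i.e. A_i maps E_μ into E_μ), and for all v ∈ E_μ and all i, j one has A_i A_j v + A_j A_i v = 2 δ_{ij} μ v; in particular, the restrictions μ^{-1/2} A_i|_{E_μ} form a Clifford system on E_μ. -/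
open Matrix
/-- Let `A_1, …, A_n` (`n ≥ 1`) be symmetric real `m × m` matrices with
`A_i A_j + A_j A_i = 2 δ_{ij} S`, where `S = A_1²`. Then for every `μ > 0` the eigenspace
`E_μ = ker (S − μ·Id)` is invariant under each `A_i`, and on `E_μ` one has
`A_i A_j v + A_j A_i v = 2 δ_{ij} μ v`; in particular the restrictions `μ^{-1/2} A_i|_{E_μ}`
form a Clifford system on `E_μ`. -/
theorem clifford_relations_eigenspace {m n : ℕ} (hn : 1 ≤ n)
    (A : Fin n → Matrix (Fin m) (Fin m) ℝ) (hsymm : ∀ i, (A i).IsSymm)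
    (hrel : ∀ i j : Fin n,
      A i * A j + A j * A i
        = (if i = j then (2 : ℝ) else 0) • (A ⟨0, hn⟩ * A ⟨0, hn⟩))
    (μ : ℝ) (hμ : 0 < μ) :
    ∀ v : Fin m → ℝ, (A ⟨0, hn⟩ * A ⟨0, hn⟩) *ᵥ v = μ • v →
      (∀ i : Fin n,
        (A ⟨0, hn⟩ * A ⟨0, hn⟩) *ᵥ (A i *ᵥ v) = μ • (A i *ᵥ v)) ∧
      (∀ i j : Fin n,
        A i *ᵥ (A j *ᵥ v) + A j *ᵥ (A i *ᵥ v)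
          = (if i = j then 2 * μ else 0) • v) ∧
      (∀ i j : Fin n,
        ((μ ^ (-(1:ℝ)/2)) • A i) *ᵥ (((μ ^ (-(1:ℝ)/2)) • A j) *ᵥ v)
            + ((μ ^ (-(1:ℝ)/2)) • A j) *ᵥ (((μ ^ (-(1:ℝ)/2)) • A i) *ᵥ v)
          = (if i = j then (2:ℝ) else 0) • v) := by
  intro v hv
  set S := A ⟨0, hn⟩ * A ⟨0, hn⟩ with hS
  -- each A_i squares to S
  have hsq : ∀ i, A i * A i = S := by
    intro i
    have h := hrel i i
    simp only [if_pos rfl] at h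
    have h2 : (2:ℝ) • (A i * A i) = (2:ℝ) • S := by
      rw [two_smul]; exact h
    exact smul_right_injective _ (by norm_num) h2
  -- A_i commutes with S
  have hcomm : ∀ i, S * A i = A i * S := by
    intro i
    rw [← hsq i, mul_assoc, ← mul_assoc]
  have part1 : ∀ i : Fin n, S *ᵥ (A i *ᵥ v) = μ • (A i *ᵥ v) := by
    intro i
    calc S *ᵥ (A i *ᵥ v) = (S * A i) *ᵥ v := by rw [mulVec_mulVec]
      _ = (A i * S) *ᵥ v := by rw [hcomm]
      _ = A i *ᵥ (S *ᵥ v) := by rw [mulVec_mulVec]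
      _ = μ • (A i *ᵥ v) := by rw [hv, mulVec_smul]
  have part2 : ∀ i j : Fin n,
      A i *ᵥ (A j *ᵥ v) + A j *ᵥ (A i *ᵥ v)
        = (if i = j then 2 * μ else 0) • v := by
    intro i j
    have h := congrArg (· *ᵥ v) (hrel i j)
    simp only [add_mulVec, smul_mulVec, hv, smul_smul, ← mulVec_mulVec] at h
    rw [h]
    congr 1
    split_ifs <;> ring
  refine ⟨part1, part2, ?_⟩
  intro i j
  have hc : (μ ^ (-(1:ℝ)/2)) * (μ ^ (-(1:ℝ)/2)) = μ⁻¹ := by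
    rw [← Real.rpow_add hμ]
    norm_num [Real.rpow_neg_one]
  have h2 := part2 i j
  rw [smul_mulVec, smul_mulVec, smul_mulVec, smul_mulVec,
    mulVec_smul, mulVec_smul, smul_smul, smul_smul, ← smul_add, h2, smul_smul, hc]
  congr 1
  split_ifs
  · field_simp
  · simp
end

section
/- Let n ≥ 1 and let (A_1, …, A_{2n}) be a Clifford system on ℝ^m. Then for all x ∈ ℝ^m: ‖∇u(x)‖² = 16 ‖x‖² q(x), where u(x) = Σ_{i=1}^n ⟨x,A_ix⟩² − Σ_{i=1}^n ⟨x,A_{n+i}x⟩² and q(x) = Σ_{i=1}^{2n} ⟨x,A_ix⟩². -/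
open RealInnerProductSpace

/-- A Clifford system on `ℝ^m`. -/
def IsCliffordSystem {m N : ℕ} (A : Fin N → Matrix (Fin m) (Fin m) ℝ) : Prop :=
  (∀ i, (A i).IsSymm) ∧
    ∀ i j, A i * A j + A j * A i
      = (if i = j then (2 : ℝ) else 0) • (1 : Matrix (Fin m) (Fin m) ℝ)

/-- For a Clifford system `(A_1, …, A_{2n})` on `ℝ^m`, the degree-4 polynomial
`u(x) = Σ_{i=1}^n ⟨x, A_i x⟩² − Σ_{i=1}^n ⟨x, A_{n+i} x⟩²`. -/
noncomputable def cliffU {m n : ℕ} (A : Fin (n + n) → Matrix (Fin m) (Fin m) ℝ)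
    (x : EuclideanSpace ℝ (Fin m)) : ℝ :=
  ∑ i : Fin n, (quadForm (A (Fin.castAdd n i)) x) ^ 2
    - ∑ i : Fin n, (quadForm (A (Fin.natAdd n i)) x) ^ 2

/-- For a Clifford system `(A_1, …, A_{2n})` on `ℝ^m`, the degree-4 polynomial
`q(x) = Σ_{i=1}^{2n} ⟨x, A_i x⟩² = ‖P(x)‖²`. -/
noncomputable def cliffQ {m n : ℕ} (A : Fin (n + n) → Matrix (Fin m) (Fin m) ℝ)
    (x : EuclideanSpace ℝ (Fin m)) : ℝ :=
  ∑ i : Fin (n + n), (quadForm (A i) x) ^ 2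

/-!
For a Clifford system the vectors `A i x` are pairwise orthogonal of norm `‖x‖`: polarise
`A i * A j + A j * A i = 2 δᵢⱼ`. With signs `εᵢ = ±1`, `u = ∑ εᵢ Pᵢ²` and
`∇Pᵢ(x) = 2 A i x`, so `∇u(x) = ∑ 4 εᵢ Pᵢ(x) A i x`, whose squared norm is
`∑ 16 Pᵢ(x)² ‖x‖² = 16 ‖x‖² q(x)`.
-/

theorem hasGradientAt_sum_mul_sq {F ι : Type*} [NormedAddCommGroup F] [InnerProductSpace ℝ F]
    [CompleteSpace F] (s : Finset ι) (c : ι → ℝ) {f : ι → F → ℝ} {g : ι → F} {x : F}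
    (hf : ∀ i, HasGradientAt (f i) (g i) x) :
    HasGradientAt (fun y ↦ ∑ i ∈ s, c i * f i y ^ 2)
      (∑ i ∈ s, (2 * c i * f i x) • g i) x := by
  simp only [hasGradientAt_iff_hasFDerivAt, map_sum, map_smul] at hf ⊢
  refine HasFDerivAt.fun_sum fun i _ ↦ ?_
  refine (((hf i).pow 2).const_mul (c i)).congr_fderiv ?_
  rw [smul_smul]
  ring_nf

section CliffordSystem

variable {m : ℕ}

local notation "T" => Matrix.toEuclideanCLM (n := Fin m) (𝕜 := ℝ)

theorem Matrix.IsSymm.inner_toEuclideanCLM_left {A : Matrix (Fin m) (Fin m) ℝ} (hA : A.IsSymm)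
    (x y : EuclideanSpace ℝ (Fin m)) : ⟪T A x, y⟫ = ⟪x, T A y⟫ := by
  have hT : IsSelfAdjoint (T A) := by
    rw [IsSelfAdjoint, ← map_star, Matrix.star_eq_conjTranspose,
      Matrix.conjTranspose_eq_transpose_of_trivial, hA.eq]
  exact hT.isSymmetric x y

theorem Matrix.IsSymm.hasGradientAt_quadForm {A : Matrix (Fin m) (Fin m) ℝ} (hA : A.IsSymm)
    (x : EuclideanSpace ℝ (Fin m)) : HasGradientAt (quadForm A) ((2 : ℝ) • T A x) x := by
  rw [hasGradientAt_iff_hasFDerivAt]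
  -- `quadForm A` is definitionally `fun y ↦ ⟪id y, T A y⟫`
  refine ((hasFDerivAt_id x).inner ℝ (T A).hasFDerivAt).congr_fderiv ?_
  ext h
  simp only [ContinuousLinearMap.comp_apply, ContinuousLinearMap.prod_apply,
    ContinuousLinearMap.id_apply, fderivInnerCLM_apply, map_smul, _root_.smul_apply,
    InnerProductSpace.toDual_apply_apply, smul_eq_mul, id_eq]
  rw [← hA.inner_toEuclideanCLM_left x h, real_inner_comm (T A x) h]
  ring

variable {N : ℕ} {A : Fin N → Matrix (Fin m) (Fin m) ℝ}

theorem IsCliffordSystem.inner_toEuclideanCLM_apply (hA : IsCliffordSystem A) (i j : Fin N)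
    (x : EuclideanSpace ℝ (Fin m)) :
    ⟪T (A i) x, T (A j) x⟫ = if i = j then ‖x‖ ^ 2 else 0 := by
  have h : ⟪x, T (A i * A j + A j * A i) x⟫ = 2 * ⟪T (A i) x, T (A j) x⟫ := by
    rw [map_add, map_mul, map_mul, add_apply, mul_apply_eq_comp, mul_apply_eq_comp,
      inner_add_right, ← (hA.1 i).inner_toEuclideanCLM_left x,
      ← (hA.1 j).inner_toEuclideanCLM_left x, real_inner_comm (T (A j) x)]
    ring
  rw [hA.2 i j, map_smul, map_one, smul_apply, one_apply_eq_self,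
    real_inner_smul_right, real_inner_self_eq_norm_sq] at h
  split_ifs at h ⊢ <;> linarith

theorem IsCliffordSystem.norm_sum_smul_toEuclideanCLM_sq (hA : IsCliffordSystem A)
    (c : Fin N → ℝ) (x : EuclideanSpace ℝ (Fin m)) :
    ‖∑ i, c i • T (A i) x‖ ^ 2 = (∑ i, c i ^ 2) * ‖x‖ ^ 2 := by
  rw [← real_inner_self_eq_norm_sq, sum_inner, Finset.sum_mul]
  refine Finset.sum_congr rfl fun i _ ↦ ?_
  simp only [inner_sum, real_inner_smul_left, real_inner_smul_right,
    hA.inner_toEuclideanCLM_apply, mul_ite, mul_zero, Finset.sum_ite_eq, Finset.mem_univ, if_true]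
  ring

end CliffordSystem

def cliffSign (n : ℕ) : Fin (n + n) → ℝ :=
  Fin.append (fun _ ↦ 1) (fun _ ↦ -1)

theorem cliffSign_sq (n : ℕ) (i : Fin (n + n)) : cliffSign n i ^ 2 = 1 := by
  cases i using Fin.addCases <;>
    simp only [cliffSign, Fin.append_left, Fin.append_right, one_pow, neg_one_sq]

theorem cliffU_eq_sum_cliffSign_mul_sq {m n : ℕ}
    (A : Fin (n + n) → Matrix (Fin m) (Fin m) ℝ) :
    cliffU A = fun x ↦ ∑ i, cliffSign n i * quadForm (A i) x ^ 2 := by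
  ext x
  simp only [cliffU, cliffSign, Fin.sum_univ_add, Fin.append_left, Fin.append_right,
    one_mul, neg_one_mul, Finset.sum_neg_distrib, sub_eq_add_neg]

theorem grad_u_sq_general {m n : ℕ}
    (A : Fin (n + n) → Matrix (Fin m) (Fin m) ℝ) (hA : IsCliffordSystem A) :
    ∀ x : EuclideanSpace ℝ (Fin m),
      ‖gradient (cliffU A) x‖ ^ 2 = 16 * ‖x‖ ^ 2 * cliffQ A x := by
  intro x
  have hgrad := hasGradientAt_sum_mul_sq Finset.univ (cliffSign n)
    fun i ↦ (hA.1 i).hasGradientAt_quadForm x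
  rw [cliffU_eq_sum_cliffSign_mul_sq, hgrad.gradient]
  simp_rw [smul_smul]
  rw [hA.norm_sum_smul_toEuclideanCLM_sq, cliffQ, Finset.mul_sum, Finset.sum_mul]
  refine Finset.sum_congr rfl fun i _ ↦ ?_
  linear_combination (16 * ‖x‖ ^ 2 * quadForm (A i) x ^ 2) * cliffSign_sq n i

/-- For a Clifford system `(A_1, …, A_{2n})` on `ℝ^m` (`n ≥ 1`):
`‖∇u(x)‖² = 16 ‖x‖² q(x)` for all `x ∈ ℝ^m`. -/
theorem grad_u_sq {m n : ℕ} (hn : 1 ≤ n)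
    (A : Fin (n + n) → Matrix (Fin m) (Fin m) ℝ) (hA : IsCliffordSystem A) :
    ∀ x : EuclideanSpace ℝ (Fin m),
      ‖gradient (cliffU A) x‖ ^ 2 = 16 * ‖x‖ ^ 2 * cliffQ A x :=
  grad_u_sq_general A hA
end

section
/- Let n ≥ 1 and let (A_1, …, A_{2n}) be a Clifford system on ℝ^m. Then the degree-4 polynomial u(x) = Σ_{i=1}^n ⟨x,A_ix⟩² − Σ_{i=1}^n ⟨x,A_{n+i}x⟩² is harmonic on ℝ^m, i.e. Δu = 0. -/
/-!
If `A` is symmetric and `P(x) = ⟨x, A x⟩`, then `∇P(x) = 2 A x` and `ΔP = 2 tr A`, so the product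
rule gives `Δ(P²) = 2 P ΔP + 2 ‖∇P‖² = 4 tr(A) P + 8 ‖A x‖²`. In a Clifford system with at least
two members every `A_i` is an involutive isometry, and it anticommutes with some other `A_j`, whence
`tr A_i = tr(A_j A_i A_j) = -tr A_i = 0`. So every `Δ(P_i²)` equals `8 ‖x‖²`, and the `n` positive
and `n` negative terms of `u` cancel.
-/

open RealInnerProductSpace

/-- The Euclidean Laplacian `Δf(x) = Σ_i ∂²f/∂x_i²(x)` on `ℝ^m`. -/
noncomputable def laplacian {m : ℕ} (f : EuclideanSpace ℝ (Fin m) → ℝ)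
    (x : EuclideanSpace ℝ (Fin m)) : ℝ :=
  ∑ i, fderiv ℝ (fun y => fderiv ℝ f y (EuclideanSpace.single i 1)) x
    (EuclideanSpace.single i 1)

lemma ContDiff.differentiable_fderiv_apply {𝕜 E F : Type*} [NontriviallyNormedField 𝕜]
    [NormedAddCommGroup E] [NormedSpace 𝕜 E] [NormedAddCommGroup F] [NormedSpace 𝕜 F] {f : E → F}
    (hf : ContDiff 𝕜 2 f) (v : E) : Differentiable 𝕜 (fun y => fderiv 𝕜 f y v) :=
  ((hf.fderiv_right (m := 1) (by norm_num)).clm_apply contDiff_const).differentiable one_ne_zero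

section Laplacian

variable {m : ℕ} {f g : EuclideanSpace ℝ (Fin m) → ℝ}

lemma laplacian_sub (hf : ContDiff ℝ 2 f) (hg : ContDiff ℝ 2 g) (x : EuclideanSpace ℝ (Fin m)) :
    laplacian (f - g) x = laplacian f x - laplacian g x := by
  have hdf := hf.differentiable (by norm_num)
  have hdg := hg.differentiable (by norm_num)
  have h (v) : (fun y => fderiv ℝ (f - g) y v)
      = (fun y => fderiv ℝ f y v) - (fun y => fderiv ℝ g y v) := by
    ext y; simp [fderiv_sub (hdf y) (hdg y)]
  simp only [laplacian, h, sub_apply, Finset.sum_sub_distrib,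
    fderiv_sub (hf.differentiable_fderiv_apply _ x) (hg.differentiable_fderiv_apply _ x)]

lemma laplacian_sum {ι : Type*} (s : Finset ι) {f : ι → EuclideanSpace ℝ (Fin m) → ℝ}
    (hf : ∀ i ∈ s, ContDiff ℝ 2 (f i)) (x : EuclideanSpace ℝ (Fin m)) :
    laplacian (∑ i ∈ s, f i) x = ∑ i ∈ s, laplacian (f i) x := by
  have h (v) : (fun y => fderiv ℝ (∑ i ∈ s, f i) y v)
      = ∑ i ∈ s, (fun y => fderiv ℝ (f i) y v) := by
    ext y
    simp [fderiv_sum fun i hi => (hf i hi).differentiable (by norm_num) y]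
  simp only [laplacian, h, fderiv_sum fun i hi => (hf i hi).differentiable_fderiv_apply _ x,
    sum_apply]
  exact Finset.sum_comm

lemma laplacian_mul (hf : ContDiff ℝ 2 f) (hg : ContDiff ℝ 2 g) (x : EuclideanSpace ℝ (Fin m)) :
    laplacian (f * g) x = f x * laplacian g x + g x * laplacian f x
      + 2 * ∑ i, fderiv ℝ f x (EuclideanSpace.single i 1)
        * fderiv ℝ g x (EuclideanSpace.single i 1) := by
  have hdf := hf.differentiable (by norm_num)
  have hdg := hg.differentiable (by norm_num)
  have h (v) : (fun y => fderiv ℝ (f * g) y v)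
      = f * (fun y => fderiv ℝ g y v) + g * (fun y => fderiv ℝ f y v) := by
    ext y; simp [fderiv_mul (hdf y) (hdg y)]
  simp only [laplacian, h]
  rw [Finset.mul_sum, Finset.mul_sum, Finset.mul_sum, ← Finset.sum_add_distrib,
    ← Finset.sum_add_distrib]
  refine Finset.sum_congr rfl fun i _ => ?_
  have hdf' := hf.differentiable_fderiv_apply (EuclideanSpace.single i 1) x
  have hdg' := hg.differentiable_fderiv_apply (EuclideanSpace.single i 1) x
  rw [fderiv_add ((hdf x).mul hdg') ((hdg x).mul hdf'), fderiv_mul (hdf x) hdg',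
    fderiv_mul (hdg x) hdf']
  simp only [add_apply, smul_apply, smul_eq_mul]
  ring

end Laplacian

lemma Matrix.IsSymm.isSymmetric_toEuclideanLin_s10 {ι : Type*} [Fintype ι] [DecidableEq ι]
    {A : Matrix ι ι ℝ} (hA : A.IsSymm) : (Matrix.toEuclideanLin A).IsSymmetric :=
  Matrix.isSymmetric_toEuclideanLin_iff.mpr (by simpa using hA)

section QuadForm

variable {m : ℕ} (A : Matrix (Fin m) (Fin m) ℝ)

lemma contDiff_quadForm {k : WithTop ℕ∞} : ContDiff ℝ k (quadForm A) :=
  contDiff_id.inner ℝ (LinearMap.toContinuousLinearMap (Matrix.toEuclideanLin A)).contDiff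

lemma fderiv_quadForm_apply (x v : EuclideanSpace ℝ (Fin m)) :
    fderiv ℝ (quadForm A) x v
      = ⟪x, Matrix.toEuclideanLin A v⟫ + ⟪v, Matrix.toEuclideanLin A x⟫ := by
  set L := LinearMap.toContinuousLinearMap (Matrix.toEuclideanLin A)
  have h := fderiv_inner_apply ℝ (differentiableAt_id (x := x)) L.differentiableAt v
  rw [fderiv_id, L.fderiv] at h
  exact h

lemma laplacian_quadForm (x : EuclideanSpace ℝ (Fin m)) :
    laplacian (quadForm A) x = 2 * A.trace := by
  set L := LinearMap.toContinuousLinearMap (Matrix.toEuclideanLin A)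
  have h (v) : (fun y => fderiv ℝ (quadForm A) y v)
      = ⇑(innerSL ℝ (L v) + (innerSL ℝ v).comp L : EuclideanSpace ℝ (Fin m) →L[ℝ] ℝ) := by
    ext y
    rw [fderiv_quadForm_apply, real_inner_comm]
    rfl
  have hdiag (i) : ⟪EuclideanSpace.single i 1, L (EuclideanSpace.single i 1)⟫ = A i i := by
    simp [L, EuclideanSpace.inner_single_left, Matrix.toLpLin_apply]
  simp only [laplacian, h, ContinuousLinearMap.fderiv, add_apply, ContinuousLinearMap.comp_apply,
    innerSL_apply_apply, real_inner_comm _ (L _), hdiag, Matrix.trace, Matrix.diag, Finset.mul_sum]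
  exact Finset.sum_congr rfl fun i _ => (two_mul _).symm

lemma fderiv_quadForm_apply_of_isSymm (hA : A.IsSymm) (x v : EuclideanSpace ℝ (Fin m)) :
    fderiv ℝ (quadForm A) x v = 2 * ⟪Matrix.toEuclideanLin A x, v⟫ := by
  rw [fderiv_quadForm_apply, ← hA.isSymmetric_toEuclideanLin_s10 x v, real_inner_comm v]
  ring

lemma laplacian_quadForm_sq (hA : A.IsSymm) (x : EuclideanSpace ℝ (Fin m)) :
    laplacian (quadForm A ^ 2) x
      = 4 * A.trace * quadForm A x + 8 * ‖Matrix.toEuclideanLin A x‖ ^ 2 := by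
  have hgrad : ∑ i, fderiv ℝ (quadForm A) x (EuclideanSpace.single i 1) ^ 2
      = 4 * ‖Matrix.toEuclideanLin A x‖ ^ 2 := by
    simp [fderiv_quadForm_apply_of_isSymm A hA, EuclideanSpace.inner_single_right,
      EuclideanSpace.norm_sq_eq, mul_pow, Finset.mul_sum]
    norm_num
  rw [sq, laplacian_mul (contDiff_quadForm A) (contDiff_quadForm A), laplacian_quadForm]
  simp only [← sq, hgrad]
  ring

end QuadForm

lemma Matrix.trace_eq_zero_of_mul_eq_neg_mul {ι R : Type*} [Fintype ι] [DecidableEq ι]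
    [CommRing R] [IsAddTorsionFree R] {A B : Matrix ι ι R} (hB : B * B = 1)
    (hAB : A * B = -(B * A)) : A.trace = 0 :=
  self_eq_neg.mp <| calc
    A.trace = (A * (B * B)).trace := by rw [hB, mul_one]
    _ = (B * (A * B)).trace := Matrix.trace_mul_cycle' A B B
    _ = -A.trace := by rw [hAB, mul_neg, ← mul_assoc, hB, one_mul, Matrix.trace_neg]

namespace IsCliffordSystem

variable {m N : ℕ} {A : Fin N → Matrix (Fin m) (Fin m) ℝ}

lemma mul_self (hA : IsCliffordSystem A) (j : Fin N) : A j * A j = 1 := by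
  have h := hA.2 j j
  rw [if_pos rfl, ← two_smul ℝ] at h
  exact smul_right_injective _ two_ne_zero h

lemma mul_eq_neg_mul (hA : IsCliffordSystem A) {i j : Fin N} (hij : i ≠ j) :
    A i * A j = -(A j * A i) := by
  have h := hA.2 i j
  rw [if_neg hij, zero_smul] at h
  exact eq_neg_of_add_eq_zero_left h

lemma trace_eq_zero (hA : IsCliffordSystem A) (hN : 2 ≤ N) (j : Fin N) : (A j).trace = 0 := by
  have : Nontrivial (Fin N) := Fin.nontrivial_iff_two_le.mpr hN
  obtain ⟨i, hij⟩ := exists_ne j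
  exact Matrix.trace_eq_zero_of_mul_eq_neg_mul (hA.mul_self i) (hA.mul_eq_neg_mul hij.symm)

lemma norm_toEuclideanLin (hA : IsCliffordSystem A) (j : Fin N) (x : EuclideanSpace ℝ (Fin m)) :
    ‖Matrix.toEuclideanLin (A j) x‖ = ‖x‖ := by
  have hsymm := (hA.1 j).isSymmetric_toEuclideanLin_s10
  have hinv : Matrix.toEuclideanLin (A j) (Matrix.toEuclideanLin (A j) x) = x := by
    simp [Matrix.toLpLin_apply, Matrix.mulVec_mulVec, hA.mul_self j]
  rw [← sq_eq_sq₀ (norm_nonneg _) (norm_nonneg _), ← real_inner_self_eq_norm_sq,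
    ← real_inner_self_eq_norm_sq, hsymm, hinv]

lemma laplacian_quadForm_sq (hA : IsCliffordSystem A) (hN : 2 ≤ N) (j : Fin N)
    (x : EuclideanSpace ℝ (Fin m)) : laplacian (quadForm (A j) ^ 2) x = 8 * ‖x‖ ^ 2 := by
  rw [_root_.laplacian_quadForm_sq _ (hA.1 j), hA.trace_eq_zero hN, hA.norm_toEuclideanLin]
  ring

end IsCliffordSystem

lemma cliffU_eq_sub {m n : ℕ} (A : Fin (n + n) → Matrix (Fin m) (Fin m) ℝ) :
    cliffU A = ∑ i : Fin n, quadForm (A (Fin.castAdd n i)) ^ 2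
      - ∑ i : Fin n, quadForm (A (Fin.natAdd n i)) ^ 2 := by
  ext x
  simp [cliffU]

theorem u_harmonic_general {m n : ℕ}
    (A : Fin (n + n) → Matrix (Fin m) (Fin m) ℝ) (hA : IsCliffordSystem A) :
    ∀ x : EuclideanSpace ℝ (Fin m), laplacian (cliffU A) x = 0 := by
  intro x
  have hsmooth (j) : ContDiff ℝ 2 (quadForm (A j) ^ 2) := (contDiff_quadForm _).pow 2
  have hterm (j : Fin (n + n)) : laplacian (quadForm (A j) ^ 2) x = 8 * ‖x‖ ^ 2 :=
    hA.laplacian_quadForm_sq (by have := j.pos; omega) j x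
  have hsum (f : Fin n → Fin (n + n)) : ContDiff ℝ 2 (∑ i, quadForm (A (f i)) ^ 2) := by
    rw [Finset.sum_fn]; exact ContDiff.sum fun i _ => hsmooth _
  rw [cliffU_eq_sub, laplacian_sub (hsum _) (hsum _),
    laplacian_sum _ (fun j _ => hsmooth _), laplacian_sum _ (fun j _ => hsmooth _)]
  simp only [hterm, sub_self]

/-- For a Clifford system `(A_1, …, A_{2n})` on `ℝ^m` (`n ≥ 1`), the
degree-4 polynomial `u(x) = Σ_{i=1}^n ⟨x,A_ix⟩² − Σ_{i=1}^n ⟨x,A_{n+i}x⟩²` is harmonic. -/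
theorem u_harmonic {m n : ℕ} (hn : 1 ≤ n)
    (A : Fin (n + n) → Matrix (Fin m) (Fin m) ℝ) (hA : IsCliffordSystem A) :
    ∀ x : EuclideanSpace ℝ (Fin m), laplacian (cliffU A) x = 0 :=
  u_harmonic_general A hA
end
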